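/- arXiv:1607.03526 — 2 statements merged into one kernel-verified Lean document; each statement's English description precedes it below -/
import Mathlib

section
/- Let u be a second-order process with covariance function c. If c is twice continuously differentiable on ℝ^d × ℝ^d, then for every x ∈ ℝ^d and every coordinate direction r ∈ {1,…,d}, the mean-square partial derivative ∂_r u(x) exists, i.e. the difference quotients (u(x + h e_r) − u(x))/h converge in L²(μ)-norm as h → 0. -/
/-!
Along the line `s ↦ u (x + s • e_r)`, the inner product of the difference quotients `Δ_h` and
`Δ_k` is the mixed second difference quotient of the covariance `c`, which by the mean value
theorem, applied in each variable, tends to a mixed partial derivative of `c` as `h` and `k` tend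
to `0` independently. Hence `‖Δ_h - Δ_k‖² → 0`, and the difference quotients converge because
`L²(μ)` is complete.
-/

open MeasureTheory Filter Set Topology
open scoped Interval InnerProductSpace

section MixedDifference

variable {E : Type*} [NormedAddCommGroup E] [NormedSpace ℝ E]

theorem norm_mixedDiff_sub_smul_le {F P Q : ℝ × ℝ → E} {B : E} {ε h k : ℝ}
    (hP : ∀ s t, HasDerivAt (fun s => F (s, t)) (P (s, t)) s)
    (hQ : ∀ s t, HasDerivAt (fun t => P (s, t)) (Q (s, t)) t)
    (hQB : ∀ s ∈ [[0, h]], ∀ t ∈ [[0, k]], ‖Q (s, t) - B‖ ≤ ε) :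
    ‖F (h, k) - F (h, 0) - F (0, k) + F (0, 0) - (h * k) • B‖ ≤ ε * |k| * |h| := by
  have hslice : ∀ s ∈ [[0, h]], ‖P (s, k) - P (s, 0) - k • B‖ ≤ ε * |k| := by
    intro s hs
    have := (convex_uIcc (0 : ℝ) k).norm_image_sub_le_of_norm_hasDerivWithin_le
      (f := fun t => P (s, t) - t • B)
      (fun t _ => ((hQ s t).sub ((hasDerivAt_id t).smul_const B)).hasDerivWithinAt)
      (fun t ht => by simpa using hQB s hs t ht) left_mem_uIcc right_mem_uIcc
    simpa [sub_sub, add_comm] using this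
  have := (convex_uIcc (0 : ℝ) h).norm_image_sub_le_of_norm_hasDerivWithin_le
    (f := fun s => F (s, k) - F (s, 0) - (s * k) • B)
    (fun s _ => (((hP s k).sub (hP s 0)).sub
      ((hasDerivAt_mul_const k).smul_const B)).hasDerivWithinAt)
    hslice left_mem_uIcc right_mem_uIcc
  convert this using 2
  · simp only [zero_mul, zero_smul, sub_zero]; abel
  · rw [sub_zero, Real.norm_eq_abs]

theorem tendsto_mixedDiffQuot {F : ℝ × ℝ → E} (hF : ContDiff ℝ 2 F) :
    Tendsto (fun p : ℝ × ℝ => (p.1 * p.2)⁻¹ • (F (p.1, p.2) - F (p.1, 0) - F (0, p.2) + F (0, 0)))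
      (𝓝[≠] 0 ×ˢ 𝓝[≠] 0) (𝓝 (fderiv ℝ (fun q => fderiv ℝ F q (1, 0)) 0 (0, 1))) := by
  set P : ℝ × ℝ → E := fun q => fderiv ℝ F q (1, 0)
  set Q : ℝ × ℝ → E := fun q => fderiv ℝ P q (0, 1)
  have hP : ContDiff ℝ 1 P :=
    (ContinuousLinearMap.apply ℝ E ((1 : ℝ), (0 : ℝ))).contDiff.comp
      (hF.fderiv_right (by norm_num))
  have hQ : Continuous Q :=
    ((ContinuousLinearMap.apply ℝ E ((0 : ℝ), (1 : ℝ))).contDiff.comp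
      (hP.fderiv_right (m := 0) le_rfl)).continuous
  have hFs : ∀ s t, HasDerivAt (fun s => F (s, t)) (P (s, t)) s := fun s t =>
    ((hF.differentiable (by norm_num) _).hasFDerivAt).comp_hasDerivAt s
      ((hasDerivAt_id s).prodMk (hasDerivAt_const s t))
  have hPt : ∀ s t, HasDerivAt (fun t => P (s, t)) (Q (s, t)) t := fun s t =>
    ((hP.differentiable one_ne_zero _).hasFDerivAt).comp_hasDerivAt t
      ((hasDerivAt_const t s).prodMk (hasDerivAt_id t))
  rw [Metric.tendsto_nhds]
  intro ε hε
  obtain ⟨δ, hδ, hQδ⟩ :=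
    Metric.continuousAt_iff.1 (hQ.continuousAt (x := 0)) (ε / 2) (half_pos hε)
  have hsmall : ∀ᶠ a in 𝓝[≠] (0 : ℝ), a ≠ 0 ∧ |a| < δ :=
    eventually_mem_nhdsWithin.and (nhdsWithin_le_nhds (Metric.ball_mem_nhds 0 hδ))
      |>.mono fun a ha => ⟨ha.1, by simpa using ha.2⟩
  filter_upwards [hsmall.prod_mk hsmall]
  rintro ⟨h, k⟩ ⟨⟨h0, hh⟩, ⟨k0, hk⟩⟩
  dsimp only at *
  have hrect := norm_mixedDiff_sub_smul_le hFs hPt (B := Q 0) (ε := ε / 2) fun s hs t ht => by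
    rw [← dist_eq_norm]
    refine (hQδ ?_).le
    have hs' := abs_sub_left_of_mem_uIcc hs
    have ht' := abs_sub_left_of_mem_uIcc ht
    simp only [sub_zero] at hs' ht'
    simp only [Prod.dist_eq, Real.dist_eq, Prod.fst_zero, Prod.snd_zero, sub_zero]
    exact max_lt (hs'.trans_lt hh) (ht'.trans_lt hk)
  have hhk : h * k ≠ 0 := mul_ne_zero h0 k0
  rw [dist_eq_norm]
  calc ‖(h * k)⁻¹ • (F (h, k) - F (h, 0) - F (0, k) + F (0, 0)) - Q 0‖
      = |h * k|⁻¹ * ‖F (h, k) - F (h, 0) - F (0, k) + F (0, 0) - (h * k) • Q 0‖ := by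
        rw [← Real.norm_eq_abs, ← norm_inv, ← norm_smul, smul_sub, smul_smul, inv_mul_cancel₀ hhk,
          one_smul]
    _ ≤ |h * k|⁻¹ * (ε / 2 * |k| * |h|) := by gcongr
    _ = ε / 2 := by rw [abs_mul]; field_simp
    _ < ε := half_lt_self hε

end MixedDifference

section InnerProduct

variable {E : Type*} [NormedAddCommGroup E] [InnerProductSpace ℝ E]

theorem exists_tendsto_of_tendsto_inner [CompleteSpace E] {α : Type*} {l : Filter α} [NeBot l]
    {f : α → E} {L : ℝ} (hf : Tendsto (fun p : α × α => ⟪f p.1, f p.2⟫_ℝ) (l ×ˢ l) (𝓝 L)) :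
    ∃ v, Tendsto f l (𝓝 v) := by
  have hsq : Tendsto (fun p : α × α => ‖f p.1 - f p.2‖ ^ 2) (l ×ˢ l) (𝓝 0) := by
    have hdiag (g : α × α → α) (hg : Tendsto g (l ×ˢ l) l) :
        Tendsto (fun p => ⟪f (g p), f (g p)⟫_ℝ) (l ×ˢ l) (𝓝 L) :=
      hf.comp (hg.prodMk hg)
    convert ((hdiag _ tendsto_fst).sub (hf.const_mul 2)).add (hdiag _ tendsto_snd) using 2
    · rw [norm_sub_sq_real, real_inner_self_eq_norm_sq, real_inner_self_eq_norm_sq]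
    · ring
  have hdist : Tendsto (fun p : α × α => dist (f p.1) (f p.2)) (l ×ˢ l) (𝓝 0) := by
    simpa [dist_eq_norm] using hsq.sqrt
  rw [← cauchy_map_iff_exists_tendsto, cauchy_map_iff']
  exact tendsto_uniformity_iff_dist_tendsto_zero.2 hdist

theorem inner_slope_slope_zero (w : ℝ → E) (h k : ℝ) :
    ⟪slope w 0 h, slope w 0 k⟫_ℝ =
      (h * k)⁻¹ * (⟪w h, w k⟫_ℝ - ⟪w h, w 0⟫_ℝ - ⟪w 0, w k⟫_ℝ + ⟪w 0, w 0⟫_ℝ) := by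
  simp only [slope_def_module, sub_zero, real_inner_smul_left, real_inner_smul_right,
    inner_sub_left, inner_sub_right, mul_inv]
  ring

theorem differentiable_of_contDiff_inner [CompleteSpace E] {w : ℝ → E}
    (hw : ContDiff ℝ 2 fun p : ℝ × ℝ => ⟪w p.1, w p.2⟫_ℝ) : Differentiable ℝ w := by
  intro a
  set v : ℝ → E := fun s => w (a + s)
  have hv : ContDiff ℝ 2 fun p : ℝ × ℝ => ⟪v p.1, v p.2⟫_ℝ :=
    hw.comp ((contDiff_const.add contDiff_fst).prodMk (contDiff_const.add contDiff_snd))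
  obtain ⟨D, hD⟩ := exists_tendsto_of_tendsto_inner
    ((tendsto_mixedDiffQuot hv).congr fun p => (inner_slope_slope_zero v p.1 p.2).symm)
  simpa [v, differentiableAt_comp_add_left] using
    (hasDerivAt_iff_tendsto_slope.2 hD).differentiableAt

end InnerProduct

theorem meanSquare_partialDeriv_exists_general
    {Ω : Type*} [MeasurableSpace Ω] {μ : Measure Ω}
    {d : ℕ}
    (u : (Fin d → ℝ) → Lp ℝ 2 μ)
    (c : (Fin d → ℝ) → (Fin d → ℝ) → ℝ)
    (hc : ∀ x x' : Fin d → ℝ, c x x' = ∫ ω, (u x : Ω → ℝ) ω * (u x' : Ω → ℝ) ω ∂μ)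
    (hC2 : ContDiff ℝ 2 (Function.uncurry c))
    (x : Fin d → ℝ) (r : Fin d) :
    ∃ D : Lp ℝ 2 μ,
      Tendsto (fun h : ℝ => h⁻¹ • (u (x + h • (Pi.single r 1 : Fin d → ℝ)) - u x))
        (nhdsWithin 0 {0}ᶜ) (nhds D) := by
  have hcov : Function.uncurry c = fun p => ⟪u p.1, u p.2⟫_ℝ := by
    ext ⟨y, z⟩
    simp [hc, L2.inner_def, mul_comm]
  set w : ℝ → Lp ℝ 2 μ := fun s => u (x + s • Pi.single r 1)
  have hw : ContDiff ℝ 2 fun p : ℝ × ℝ => ⟪w p.1, w p.2⟫_ℝ := by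
    rw [hcov] at hC2
    exact hC2.comp ((contDiff_const.add (contDiff_fst.smul contDiff_const)).prodMk
      (contDiff_const.add (contDiff_snd.smul contDiff_const)))
  refine ⟨_, (hasDerivAt_iff_tendsto_slope.1
    (differentiable_of_contDiff_inner hw 0).hasDerivAt).congr fun h => ?_⟩
  simp [w, slope_def_module]

/-- If the covariance function `c` of a second-order (mean-zero, `L²`)
process `u` is twice continuously differentiable on `ℝ^d × ℝ^d`, then for every point `x`
and every coordinate direction `r`, the mean-square partial derivative `∂_r u(x)` exists,
i.e. the difference quotients `(u(x + h e_r) − u(x))/h` converge in `L²(μ)` as `h → 0`. -/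
theorem meanSquare_partialDeriv_exists
    {Ω : Type*} [MeasurableSpace Ω] {μ : Measure Ω} [IsProbabilityMeasure μ]
    {d : ℕ}
    (u : (Fin d → ℝ) → Lp ℝ 2 μ)
    (hmean : ∀ x : Fin d → ℝ, ∫ ω, (u x : Ω → ℝ) ω ∂μ = 0)
    (c : (Fin d → ℝ) → (Fin d → ℝ) → ℝ)
    (hc : ∀ x x' : Fin d → ℝ, c x x' = ∫ ω, (u x : Ω → ℝ) ω * (u x' : Ω → ℝ) ω ∂μ)
    (hC2 : ContDiff ℝ 2 (Function.uncurry c))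
    (x : Fin d → ℝ) (r : Fin d) :
    ∃ D : Lp ℝ 2 μ,
      Tendsto (fun h : ℝ => h⁻¹ • (u (x + h • (Pi.single r 1 : Fin d → ℝ)) - u x))
        (nhdsWithin 0 {0}ᶜ) (nhds D) :=
  meanSquare_partialDeriv_exists_general u c hc hC2 x r
end

section
/- Let u be a second-order process with covariance function c, let k ≥ 1, and assume c is 2k-times continuously differentiable on ℝ^d × ℝ^d. Then for every multi-index α = (α₁,…,α_d) with |α| = α₁ + ⋯ + α_d ≤ k, the iterated mean-square partial derivative ∂^α u(x) exists for all x ∈ ℝ^d, and for all multi-indices α, β with |α| ≤ k, |β| ≤ k and all x, x' ∈ ℝ^d one has ∫ (∂^α u(x)) · (∂^β u(x')) dμ = ∂^α_x ∂^β_{x'} c(x, x'), where ∂^α_x ∂^β_{x'} c denotes the mixed partial derivative of c of multi-order α in the first argument and β in the second argument. -/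
open MeasureTheory Filter

/-- `v` has mean-square (norm) partial derivative `w` in the coordinate direction `r`,
at every point: `(v(x + h e_r) − v(x))/h → w(x)` in the norm of `E` as `h → 0`. -/
def HasMSPartialDeriv {d : ℕ} {E : Type*} [NormedAddCommGroup E] [NormedSpace ℝ E]
    (v : (Fin d → ℝ) → E) (r : Fin d) (w : (Fin d → ℝ) → E) : Prop :=
  ∀ x : Fin d → ℝ,
    Tendsto (fun h : ℝ => h⁻¹ • (v (x + h • (Pi.single r 1 : Fin d → ℝ)) - v x))
      (nhdsWithin 0 {0}ᶜ) (nhds (w x))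

/-- `w` is the iterated mean-square partial derivative of `v` along the list of
coordinate directions `L` (applied successively). -/
def HasMSIterDeriv {d : ℕ} {E : Type*} [NormedAddCommGroup E] [NormedSpace ℝ E]
    (v : (Fin d → ℝ) → E) : List (Fin d) → ((Fin d → ℝ) → E) → Prop
  | [], w => w = v
  | r :: L, w => ∃ w', HasMSIterDeriv v L w' ∧ HasMSPartialDeriv w' r w

/-- Iterated partial derivative of a scalar function along a list of coordinate directions. -/
noncomputable def partialDerivList {d : ℕ} :
    List (Fin d) → ((Fin d → ℝ) → ℝ) → ((Fin d → ℝ) → ℝ)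
  | [], f => f
  | r :: L, f => fun x => fderiv ℝ (partialDerivList L f) x (Pi.single r 1)

/-!
Loève's criterion: in a Hilbert space `v h` converges as `h → 0` as soon as `⟪v h, v g⟫` converges
as `(h, g) → 0`, because then `‖v h - v g‖² → 0`. For the difference quotients of a process with
covariance `K`, `⟪v h, v g⟫` is a mixed second difference quotient of `K`, which tends to the mixed
partial derivative when `K` is `C²` (two applications of the mean value theorem). Pairing with a
fixed vector commutes with mean-square differentiation, so by induction the covariance of `∂^α u`
and `∂^β u` is `∂^α_x ∂^β_{x'} c`, a `C^(2k - |α| - |β|)` function. For `|α| < k` this covariance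
is `C²`, so one more mean-square derivative exists.
-/

open Topology Function
open scoped InnerProductSpace

section SecondDifference

variable {E : Type*} [NormedAddCommGroup E] [NormedSpace ℝ E]

theorem exists_abs_le_and_sub_eq_mul {F F' : ℝ → ℝ} (hF : ∀ t, HasDerivAt F (F' t) t) (h : ℝ) :
    ∃ θ, |θ| ≤ |h| ∧ F h - F 0 = h * F' θ := by
  have hcont : Continuous F := continuous_iff_continuousAt.2 fun t => (hF t).continuousAt
  rcases lt_trichotomy h 0 with hneg | rfl | hpos
  · obtain ⟨θ, ⟨hθ₁, hθ₂⟩, hθ⟩ :=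
      exists_hasDerivAt_eq_slope F F' hneg hcont.continuousOn fun t _ => hF t
    refine ⟨θ, by rw [abs_of_neg hθ₂, abs_of_neg hneg]; linarith, ?_⟩
    rw [hθ]; field_simp; ring
  · exact ⟨0, le_rfl, by simp⟩
  · obtain ⟨θ, ⟨hθ₁, hθ₂⟩, hθ⟩ :=
      exists_hasDerivAt_eq_slope F F' hpos hcont.continuousOn fun t _ => hF t
    refine ⟨θ, by rw [abs_of_pos hθ₁, abs_of_pos hpos]; linarith, ?_⟩
    rw [hθ]; field_simp; ring

theorem DifferentiableAt.hasDerivAt_add_smul {F : Type*} [NormedAddCommGroup F] [NormedSpace ℝ F]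
    {f : E → F} {x a : E} {t : ℝ} (hf : DifferentiableAt ℝ f (x + t • a)) :
    HasDerivAt (fun s : ℝ => f (x + s • a)) (fderiv ℝ f (x + t • a) a) t := by
  have hline : HasDerivAt (fun s : ℝ => x + s • a) a t := by
    simpa using ((hasDerivAt_id t).smul_const a).const_add x
  exact hf.hasFDerivAt.comp_hasDerivAt t hline

theorem exists_second_difference_eq {f : E → ℝ} (hf : ContDiff ℝ 2 f) (p a b : E) (h g : ℝ) :
    ∃ θ σ : ℝ, |θ| ≤ |h| ∧ |σ| ≤ |g| ∧
      f (p + h • a + g • b) - f (p + h • a) - f (p + g • b) + f p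
        = h * g * fderiv ℝ (fun y => fderiv ℝ f y a) (p + θ • a + σ • b) b := by
  set G := fun y => fderiv ℝ f y a
  have hf' : Differentiable ℝ f := hf.differentiable (by norm_num)
  have hG : Differentiable ℝ G :=
    ((hf.fderiv_right (m := 1) (by norm_num)).clm_apply contDiff_const).differentiable one_ne_zero
  obtain ⟨θ, hθ, hθeq⟩ := exists_abs_le_and_sub_eq_mul
    (F := fun s => f (p + g • b + s • a) - f (p + s • a))
    (fun s => (hf' _).hasDerivAt_add_smul.sub (hf' _).hasDerivAt_add_smul) h
  obtain ⟨σ, hσ, hσeq⟩ := exists_abs_le_and_sub_eq_mul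
    (F := fun t => G (p + θ • a + t • b)) (fun t => (hG _).hasDerivAt_add_smul) g
  refine ⟨θ, σ, hθ, hσ, ?_⟩
  simp only [zero_smul, add_zero] at hθeq hσeq
  change _ = h * (G _ - G _) at hθeq
  rw [add_right_comm p (g • b) (h • a), add_right_comm p (g • b) (θ • a), hσeq] at hθeq
  linear_combination hθeq

theorem tendsto_second_difference_quotient {f : E → ℝ} (hf : ContDiff ℝ 2 f) (p a b : E) :
    Tendsto (fun q : ℝ × ℝ => (q.1 * q.2)⁻¹ *
        (f (p + q.1 • a + q.2 • b) - f (p + q.1 • a) - f (p + q.2 • b) + f p))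
      (𝓝[≠] 0 ×ˢ 𝓝[≠] 0) (𝓝 (fderiv ℝ (fun y => fderiv ℝ f y a) p b)) := by
  choose θ σ hθ hσ hΔ using fun q : ℝ × ℝ => exists_second_difference_eq hf p a b q.1 q.2
  have hM : Continuous fun y => fderiv ℝ (fun y => fderiv ℝ f y a) y b :=
    (((hf.fderiv_right (m := 1) (by norm_num)).clm_apply contDiff_const).continuous_fderiv
      one_ne_zero).clm_apply continuous_const
  have hξ : Tendsto (fun q => p + θ q • a + σ q • b) (𝓝[≠] 0 ×ˢ 𝓝[≠] 0) (𝓝 p) := by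
    have hbound : Tendsto (fun q : ℝ × ℝ => |q.1| * ‖a‖ + |q.2| * ‖b‖) (𝓝[≠] 0 ×ˢ 𝓝[≠] 0) (𝓝 0) :=
      ((by fun_prop : Continuous fun q : ℝ × ℝ => |q.1| * ‖a‖ + |q.2| * ‖b‖).tendsto' 0 0
        (by simp)).mono_left
        ((prod_mono nhdsWithin_le_nhds nhdsWithin_le_nhds).trans_eq nhds_prod_eq.symm)
    rw [tendsto_iff_norm_sub_tendsto_zero]
    refine squeeze_zero (fun _ => norm_nonneg _) (fun q => ?_) hbound
    rw [add_assoc, add_sub_cancel_left]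
    refine (norm_add_le _ _).trans (add_le_add ?_ ?_) <;> rw [norm_smul, Real.norm_eq_abs]
    exacts [mul_le_mul_of_nonneg_right (hθ q) (norm_nonneg a),
      mul_le_mul_of_nonneg_right (hσ q) (norm_nonneg b)]
  refine ((hM.tendsto p).comp hξ).congr' ?_
  filter_upwards [prod_mem_prod self_mem_nhdsWithin self_mem_nhdsWithin] with q hq
  have hq : q.1 * q.2 ≠ 0 := mul_ne_zero hq.1 hq.2
  rw [Function.comp_apply, hΔ q, ← mul_assoc, inv_mul_cancel₀ hq, one_mul]

end SecondDifference

section Loeve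

variable {H : Type*} [NormedAddCommGroup H] [InnerProductSpace ℝ H] [CompleteSpace H]

theorem exists_tendsto_of_tendsto_inner_s3 {α : Type*} {l : Filter α} [l.NeBot] {v : α → H}
    {c : ℝ} (hv : Tendsto (fun q : α × α => ⟪v q.1, v q.2⟫_ℝ) (l ×ˢ l) (𝓝 c)) :
    ∃ W, Tendsto v l (𝓝 W) := by
  have hdiag : Tendsto (fun s => ⟪v s, v s⟫_ℝ) l (𝓝 c) := hv.comp (tendsto_id.prodMk tendsto_id)
  have hsq : Tendsto (fun q : α × α => dist (v q.1) (v q.2) ^ 2) (l ×ˢ l) (𝓝 0) := by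
    have := ((hdiag.comp tendsto_fst).sub (hv.const_mul 2)).add (hdiag.comp tendsto_snd)
    rw [show c - 2 * c + c = 0 by ring] at this
    refine this.congr fun q => ?_
    simp only [Function.comp_apply, real_inner_self_eq_norm_sq, dist_eq_norm, norm_sub_sq_real]
  have hdist := hsq.sqrt
  simp only [Real.sqrt_zero, Real.sqrt_sq dist_nonneg] at hdist
  exact cauchy_map_iff_exists_tendsto.1
    (cauchy_map_iff'.2 (tendsto_uniformity_iff_dist_tendsto_zero.2 hdist))

end Loeve

section MeanSquareDerivative

variable {E H : Type*} [NormedAddCommGroup E] [NormedSpace ℝ E]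
  [NormedAddCommGroup H] [InnerProductSpace ℝ H]

theorem exists_tendsto_slope_of_inner_eq [CompleteSpace H] {w : E → H} {K : E → E → ℝ}
    (hK : ContDiff ℝ 2 (uncurry K)) (hw : ∀ y z, ⟪w y, w z⟫_ℝ = K y z) (x e : E) :
    ∃ W, Tendsto (fun h : ℝ => h⁻¹ • (w (x + h • e) - w x)) (𝓝[≠] 0) (𝓝 W) := by
  refine exists_tendsto_of_tendsto_inner_s3
    ((tendsto_second_difference_quotient hK (x, x) (e, 0) (0, e)).congr fun q => ?_)
  simp only [real_inner_smul_left, real_inner_smul_right, inner_sub_left, inner_sub_right, hw,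
    Prod.smul_mk, smul_zero, Prod.mk_add_mk, add_zero, uncurry_apply_pair, mul_inv]
  ring

theorem inner_eq_fderiv_of_tendsto_slope {w : E → H} {ζ W : H} {φ : E → ℝ} {x e : E}
    (hw : Tendsto (fun h : ℝ => h⁻¹ • (w (x + h • e) - w x)) (𝓝[≠] 0) (𝓝 W))
    (hφ : DifferentiableAt ℝ φ x) (hζ : ∀ y, ⟪ζ, w y⟫_ℝ = φ y) :
    ⟪ζ, W⟫_ℝ = fderiv ℝ φ x e := by
  have hslope : Tendsto (slope (fun s : ℝ => φ (x + s • e)) 0) (𝓝[≠] 0) (𝓝 ⟪ζ, W⟫_ℝ) := by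
    refine (((innerSL ℝ ζ).continuous.tendsto W).comp hw).congr fun h => ?_
    simp [slope_def_field, real_inner_smul_right, inner_sub_right, hζ, div_eq_inv_mul]
  have hline : HasDerivAt (fun s : ℝ => φ (x + s • e)) (fderiv ℝ φ x e) 0 := by
    have hφ' : DifferentiableAt ℝ φ (x + (0 : ℝ) • e) := by simpa using hφ
    simpa using hφ'.hasDerivAt_add_smul
  exact tendsto_nhds_unique hslope (hasDerivAt_iff_tendsto_slope.1 hline)

end MeanSquareDerivative

section PartialDerivList

variable {d : ℕ}

theorem contDiff_uncurry_partialDerivList {E : Type*} [NormedAddCommGroup E] [NormedSpace ℝ E]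
    {f : E → (Fin d → ℝ) → ℝ} {m n : WithTop ℕ∞} (hf : ContDiff ℝ n (uncurry f))
    (L : List (Fin d)) (hL : m + L.length ≤ n) :
    ContDiff ℝ m (uncurry fun y => partialDerivList L (f y)) := by
  induction L generalizing m with
  | nil => simpa [partialDerivList] using hf.of_le (by simpa using hL)
  | cons r L ih =>
    have hL' : m + 1 + L.length ≤ n := by
      simpa [add_assoc, add_comm (1 : WithTop ℕ∞)] using hL
    have hg : ContDiff ℝ (m + 1)
        (uncurry fun (q : E × (Fin d → ℝ)) z => partialDerivList L (f q.1) z) :=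
      (ih hL').comp (contDiff_fst.comp contDiff_fst |>.prodMk contDiff_snd)
    exact hg.fderiv_apply contDiff_snd contDiff_const le_rfl

theorem ContDiff.partialDerivList {f : (Fin d → ℝ) → ℝ} {m n : WithTop ℕ∞} (hf : ContDiff ℝ n f)
    (L : List (Fin d)) (hL : m + L.length ≤ n) : ContDiff ℝ m (partialDerivList L f) :=
  (contDiff_uncurry_partialDerivList (f := fun _ : ℝ => f) (hf.comp contDiff_snd) L hL).comp
    (contDiff_prodMk_right 0)

theorem contDiff_uncurry_partialDerivList_partialDerivList {c : (Fin d → ℝ) → (Fin d → ℝ) → ℝ}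
    {m n : WithTop ℕ∞} (hc : ContDiff ℝ n (uncurry c)) (Lα Lβ : List (Fin d))
    (hL : m + Lα.length + Lβ.length ≤ n) :
    ContDiff ℝ m
      (uncurry fun y z => partialDerivList Lα (fun y => partialDerivList Lβ (c y) z) y) := by
  have hβ := contDiff_uncurry_partialDerivList hc Lβ (m := m + Lα.length) hL
  have hα := contDiff_uncurry_partialDerivList (f := fun z y => partialDerivList Lβ (c y) z)
    (hβ.comp (contDiff_snd.prodMk contDiff_fst)) Lα (m := m) le_rfl
  exact hα.comp (contDiff_snd.prodMk contDiff_fst)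

end PartialDerivList

section IteratedMeanSquareDerivative

variable {d : ℕ} {H : Type*} [NormedAddCommGroup H] [InnerProductSpace ℝ H]

theorem HasMSIterDeriv.inner_eq_partialDerivList {u w : (Fin d → ℝ) → H} {L : List (Fin d)}
    (hw : HasMSIterDeriv u L w) {ζ : H} {φ : (Fin d → ℝ) → ℝ} {n : WithTop ℕ∞}
    (hφ : ContDiff ℝ n φ) (hL : L.length ≤ n) (hζ : ∀ y, ⟪ζ, u y⟫_ℝ = φ y) (y : Fin d → ℝ) :
    ⟪ζ, w y⟫_ℝ = partialDerivList L φ y := by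
  induction L generalizing w y with
  | nil => rw [show w = u from hw]; exact hζ y
  | cons r L ih =>
    obtain ⟨w', hw', hderiv⟩ := hw
    have hL' : 1 + L.length ≤ n := by simpa [add_comm] using hL
    have hdiff : Differentiable ℝ (partialDerivList L φ) :=
      (hφ.partialDerivList L hL').differentiable one_ne_zero
    exact inner_eq_fderiv_of_tendsto_slope (hderiv y) (hdiff y)
      (ih hw' (le_trans (by simp) hL))

variable {u : (Fin d → ℝ) → H} {c : (Fin d → ℝ) → (Fin d → ℝ) → ℝ} {n : ℕ}

theorem HasMSIterDeriv.inner_eq_partialDerivList_partialDerivList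
    (hc : ContDiff ℝ n (uncurry c)) (hu : ∀ y z, ⟪u y, u z⟫_ℝ = c y z)
    {Lα Lβ : List (Fin d)} {wα wβ : (Fin d → ℝ) → H}
    (hα : HasMSIterDeriv u Lα wα) (hβ : HasMSIterDeriv u Lβ wβ)
    (hL : Lα.length + Lβ.length ≤ n) (x x' : Fin d → ℝ) :
    ⟪wα x, wβ x'⟫_ℝ = partialDerivList Lα (fun y => partialDerivList Lβ (c y) x') x := by
  have hcovβ (y : Fin d → ℝ) : ⟪wβ x', u y⟫_ℝ = partialDerivList Lβ (c y) x' := by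
    rw [real_inner_comm]
    exact hβ.inner_eq_partialDerivList (hc.comp (contDiff_prodMk_right y)) (by norm_cast; omega)
      (hu y) x'
  have hφ : ContDiff ℝ (n - Lβ.length : ℕ) fun y => partialDerivList Lβ (c y) x' :=
    (contDiff_uncurry_partialDerivList hc Lβ (by norm_cast; omega)).comp
      (contDiff_prodMk_left x')
  rw [real_inner_comm]
  exact hα.inner_eq_partialDerivList hφ (by norm_cast; omega) hcovβ x

theorem exists_hasMSIterDeriv [CompleteSpace H] (hc : ContDiff ℝ n (uncurry c))
    (hu : ∀ y z, ⟪u y, u z⟫_ℝ = c y z) (L : List (Fin d)) (hL : 2 * L.length ≤ n) :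
    ∃ w, HasMSIterDeriv u L w := by
  induction L with
  | nil => exact ⟨u, rfl⟩
  | cons r L ih =>
    simp only [List.length_cons] at hL
    obtain ⟨w, hw⟩ := ih (by omega)
    have hK := contDiff_uncurry_partialDerivList_partialDerivList hc L L (m := 2)
      (by norm_cast; omega)
    choose W hW using fun x => exists_tendsto_slope_of_inner_eq hK
      (hw.inner_eq_partialDerivList_partialDerivList hc hu hw (by omega)) x (Pi.single r 1)
    exact ⟨W, w, hw, hW⟩

end IteratedMeanSquareDerivative

theorem List.length_eq_sum_count {α : Type*} [Fintype α] [DecidableEq α] (L : List α) :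
    L.length = ∑ a, L.count a := by
  simpa using (Multiset.sum_count_eq_card (s := .univ) (m := (L : Multiset α)) (by simp)).symm

theorem meanSquare_iteratedDeriv_exists_and_covariance_general
    {Ω : Type*} [MeasurableSpace Ω] {μ : Measure Ω}
    {d : ℕ}
    (u : (Fin d → ℝ) → Lp ℝ 2 μ)
    (c : (Fin d → ℝ) → (Fin d → ℝ) → ℝ)
    (hc : ∀ x x' : Fin d → ℝ, c x x' = ∫ ω, (u x : Ω → ℝ) ω * (u x' : Ω → ℝ) ω ∂μ)
    (k : ℕ)
    (hC2k : ContDiff ℝ (2 * k) (Function.uncurry c)) :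
    (∀ α : Fin d → ℕ, (∑ r, α r) ≤ k →
      ∀ L : List (Fin d), (∀ r, L.count r = α r) →
        ∃ w : (Fin d → ℝ) → Lp ℝ 2 μ, HasMSIterDeriv u L w) ∧
    (∀ α β : Fin d → ℕ, (∑ r, α r) ≤ k → (∑ r, β r) ≤ k →
      ∀ Lα Lβ : List (Fin d), (∀ r, Lα.count r = α r) → (∀ r, Lβ.count r = β r) →
        ∀ wα wβ : (Fin d → ℝ) → Lp ℝ 2 μ,
          HasMSIterDeriv u Lα wα → HasMSIterDeriv u Lβ wβ →
          ∀ x x' : Fin d → ℝ,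
            ∫ ω, (wα x : Ω → ℝ) ω * (wβ x' : Ω → ℝ) ω ∂μ
              = partialDerivList Lα (fun y => partialDerivList Lβ (fun z => c y z) x') x) := by
  have hinner (f g : Lp ℝ 2 μ) : ⟪f, g⟫_ℝ = ∫ ω, (f : Ω → ℝ) ω * (g : Ω → ℝ) ω ∂μ := by
    simp [L2.inner_def, mul_comm]
  have hu (y z : Fin d → ℝ) : ⟪u y, u z⟫_ℝ = c y z := by rw [hinner, hc]
  have hlength {L : List (Fin d)} {α : Fin d → ℕ} (hα : ∑ r, α r ≤ k)
      (hL : ∀ r, L.count r = α r) : L.length ≤ k := by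
    simpa only [L.length_eq_sum_count, hL] using hα
  refine ⟨fun α hα L hL => exists_hasMSIterDeriv hC2k hu L (by linarith [hlength hα hL]), ?_⟩
  intro α β hα hβ Lα Lβ hLα hLβ wα wβ hwα hwβ x x'
  rw [← hinner]
  exact hwα.inner_eq_partialDerivList_partialDerivList hC2k hu hwβ
    (by linarith [hlength hα hLα, hlength hβ hLβ]) x x'

/-- If the covariance function `c` of a second-order (mean-zero, `L²`)
process `u` is `2k`-times continuously differentiable (`k ≥ 1`), then for every
multi-index `α` with `|α| ≤ k` the iterated mean-square partial derivative `∂^α u`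
exists everywhere, and for all multi-indices `α, β` with `|α| ≤ k`, `|β| ≤ k`
(realized as lists of coordinate directions with the prescribed counts) one has
`∫ (∂^α u)(x) ⬝ (∂^β u)(x') dμ = ∂^α_x ∂^β_{x'} c (x, x')`. -/
theorem meanSquare_iteratedDeriv_exists_and_covariance
    {Ω : Type*} [MeasurableSpace Ω] {μ : Measure Ω} [IsProbabilityMeasure μ]
    {d : ℕ}
    (u : (Fin d → ℝ) → Lp ℝ 2 μ)
    (hmean : ∀ x : Fin d → ℝ, ∫ ω, (u x : Ω → ℝ) ω ∂μ = 0)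
    (c : (Fin d → ℝ) → (Fin d → ℝ) → ℝ)
    (hc : ∀ x x' : Fin d → ℝ, c x x' = ∫ ω, (u x : Ω → ℝ) ω * (u x' : Ω → ℝ) ω ∂μ)
    (k : ℕ) (hk : 1 ≤ k)
    (hC2k : ContDiff ℝ (2 * k) (Function.uncurry c)) :
    (∀ α : Fin d → ℕ, (∑ r, α r) ≤ k →
      ∀ L : List (Fin d), (∀ r, L.count r = α r) →
        ∃ w : (Fin d → ℝ) → Lp ℝ 2 μ, HasMSIterDeriv u L w) ∧
    (∀ α β : Fin d → ℕ, (∑ r, α r) ≤ k → (∑ r, β r) ≤ k →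
      ∀ Lα Lβ : List (Fin d), (∀ r, Lα.count r = α r) → (∀ r, Lβ.count r = β r) →
        ∀ wα wβ : (Fin d → ℝ) → Lp ℝ 2 μ,
          HasMSIterDeriv u Lα wα → HasMSIterDeriv u Lβ wβ →
          ∀ x x' : Fin d → ℝ,
            ∫ ω, (wα x : Ω → ℝ) ω * (wβ x' : Ω → ℝ) ω ∂μ
              = partialDerivList Lα (fun y => partialDerivList Lβ (fun z => c y z) x') x) :=
  meanSquare_iteratedDeriv_exists_and_covariance_general u c hc k hC2k
end
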